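/- arXiv:2108.10627 — 2 statements merged into one kernel-verified Lean document; each statement's English description precedes it below -/
import Mathlib

section
/- Let c > 0, v ∈ ℝ³ with |v|² < c², and 0 < p' ≤ c². With B₁, B₂, B₃, B₄ as defined by B₁ = c⁴ + 3p'|v|², B₂ = c⁴ + 2c²p' + p'|v|², B₃ = c²(c² + 3p'), B₄ = c²p'(c² − |v|²), the symmetric 4×4 matrix M with M₀₀ = B₁, M₀ₖ = Mₖ₀ = B₂·vₖ (k = 1,2,3), and Mⱼₖ = B₃·vⱼvₖ + B₄·δⱼₖ (j,k = 1,2,3) is positive definite. -/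
/-!
Write `x = (a, y)` and `s = v ⬝ᵥ y`. The quadratic form `Q` of `M` is
`B₁ a² + 2 B₂ a s + B₃ s² + B₄ |y|²`, and completing the square in `a` gives
`B₁ Q = (B₁ a + B₂ s)² + (B₁ B₃ - B₂²) s² + B₁ B₄ |y|²`. The last two terms are linear in
`s² ∈ [0, |v|² |y|²]` (Cauchy–Schwarz), so they are positive as soon as they are positive at both
endpoints: `B₁ B₄ > 0` and `(B₁ B₃ - B₂²) |v|² + B₁ B₄ = p' (c² - |v|²)² (c⁴ - p' |v|²) > 0`.
-/

open Matrix Finset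

lemma dotProduct_sq_le {ι R : Type*} [Fintype ι] [CommRing R] [LinearOrder R]
    [IsStrictOrderedRing R] (v w : ι → R) : (v ⬝ᵥ w) ^ 2 ≤ (v ⬝ᵥ v) * (w ⬝ᵥ w) := by
  simpa only [dotProduct, sq] using sum_mul_sq_le_sq_mul_sq univ v w

lemma linear_pos_of_pos_at_endpoints {D E N σ m : ℝ} (hm : 0 < m) (hσ : 0 ≤ σ)
    (hσN : σ ≤ N * m) (hE : 0 < E) (hDE : 0 < D * N + E) : 0 < D * σ + E * m := by
  rcases le_or_gt 0 D with hD | hD <;> nlinarith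

lemma quadratic_pos_of_schur_pos {B₁ B₂ B₃ B₄ N a s m : ℝ} (hB₁ : 0 < B₁) (hB₄ : 0 < B₄)
    (hschur : 0 < (B₁ * B₃ - B₂ ^ 2) * N + B₁ * B₄) (hm : 0 ≤ m) (hs : s ^ 2 ≤ N * m)
    (hne : a ≠ 0 ∨ m ≠ 0) :
    0 < B₁ * a ^ 2 + 2 * B₂ * a * s + B₃ * s ^ 2 + B₄ * m := by
  rcases hm.eq_or_lt with rfl | hm
  · have hs0 : s = 0 := by nlinarith [sq_nonneg s]
    have ha : a ≠ 0 := hne.resolve_right (by simp)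
    subst hs0
    simp only [mul_zero, add_zero, zero_pow two_ne_zero]
    positivity
  · have hrest := linear_pos_of_pos_at_endpoints hm (sq_nonneg s) hs (mul_pos hB₁ hB₄) hschur
    have hsquare : B₁ * (B₁ * a ^ 2 + 2 * B₂ * a * s + B₃ * s ^ 2 + B₄ * m) =
        (B₁ * a + B₂ * s) ^ 2 + ((B₁ * B₃ - B₂ ^ 2) * s ^ 2 + B₁ * B₄ * m) := by ring
    refine pos_of_mul_pos_right (hsquare ▸ ?_) hB₁.le
    positivity

section

variable {n : ℕ}

def eulerA0 (B₁ B₂ B₃ B₄ : ℝ) (v : Fin n → ℝ) : Matrix (Fin (n + 1)) (Fin (n + 1)) ℝ :=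
  let w : Fin (n + 1) → ℝ := Fin.cons 0 v
  of fun i j =>
    if i = 0 ∧ j = 0 then B₁
    else if i = 0 then B₂ * w j
    else if j = 0 then B₂ * w i
    else B₃ * w i * w j + (if i = j then B₄ else 0)

lemma eulerA0_isHermitian (B₁ B₂ B₃ B₄ : ℝ) (v : Fin n → ℝ) :
    (eulerA0 B₁ B₂ B₃ B₄ v).IsHermitian := by
  ext i j
  simp only [eulerA0, conjTranspose_apply, of_apply, star_trivial]
  by_cases hi : i = 0 <;> by_cases hj : j = 0 <;> simp [hi, hj, eq_comm (a := i)]; ring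

lemma eulerA0_mulVec (B₁ B₂ B₃ B₄ : ℝ) (v : Fin n → ℝ) (x : Fin (n + 1) → ℝ) :
    eulerA0 B₁ B₂ B₃ B₄ v *ᵥ x = vecCons (B₁ * x 0 + B₂ * (v ⬝ᵥ Fin.tail x))
      ((B₂ * x 0 + B₃ * (v ⬝ᵥ Fin.tail x)) • v + B₄ • Fin.tail x) := by
  ext i
  refine Fin.cases ?_ (fun i => ?_) i
  · simp [eulerA0, mulVec, dotProduct, Fin.sum_univ_succ, mul_sum, Fin.tail, mul_assoc]
  · simp only [eulerA0, mulVec, dotProduct, Fin.sum_univ_succ, of_apply]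
    simp [Fin.succ_ne_zero, Fin.tail, add_mul, sum_add_distrib, ite_mul, mul_sum, mul_assoc]
    rw [sum_mul]
    ring_nf

lemma dotProduct_eulerA0_mulVec (B₁ B₂ B₃ B₄ : ℝ) (v : Fin n → ℝ) (x : Fin (n + 1) → ℝ) :
    x ⬝ᵥ (eulerA0 B₁ B₂ B₃ B₄ v *ᵥ x) = B₁ * x 0 ^ 2 + 2 * B₂ * x 0 * (v ⬝ᵥ Fin.tail x)
      + B₃ * (v ⬝ᵥ Fin.tail x) ^ 2 + B₄ * (Fin.tail x ⬝ᵥ Fin.tail x) := by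
  rw [eulerA0_mulVec, dotProduct_cons]
  change x 0 * _ + Fin.tail x ⬝ᵥ _ = _
  simp only [dotProduct_add, dotProduct_smul, smul_eq_mul, dotProduct_comm _ v]
  ring

lemma eulerA0_posDef {B₁ B₂ B₃ B₄ : ℝ} {v : Fin n → ℝ} (hB₁ : 0 < B₁) (hB₄ : 0 < B₄)
    (hschur : 0 < (B₁ * B₃ - B₂ ^ 2) * (v ⬝ᵥ v) + B₁ * B₄) :
    (eulerA0 B₁ B₂ B₃ B₄ v).PosDef := by
  refine .of_dotProduct_mulVec_pos (eulerA0_isHermitian ..) fun x hx => ?_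
  rw [star_trivial, dotProduct_eulerA0_mulVec]
  refine quadratic_pos_of_schur_pos hB₁ hB₄ hschur
    (by simpa using dotProduct_self_star_nonneg (Fin.tail x)) (dotProduct_sq_le _ _) ?_
  contrapose! hx
  rw [← Fin.cons_self_tail x, hx.1, dotProduct_self_eq_zero.1 hx.2]
  exact cons_zero_zero

end

lemma euler_schur_eq (c p' N : ℝ) :
    ((c ^ 4 + 3 * p' * N) * (c ^ 2 * (c ^ 2 + 3 * p')) - (c ^ 4 + 2 * c ^ 2 * p' + p' * N) ^ 2) * N
      + (c ^ 4 + 3 * p' * N) * (c ^ 2 * p' * (c ^ 2 - N))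
      = p' * (c ^ 2 - N) ^ 2 * (c ^ 4 - p' * N) := by
  ring

theorem A0_positive_definite_general (c p' : ℝ) (v : Fin 3 → ℝ)
    (hv : ∑ k, v k ^ 2 < c ^ 2) (hp0 : 0 < p') (hpc : p' ≤ c ^ 2) :
    ∀ nv B₁ B₂ B₃ B₄ : ℝ, ∀ w : Fin 4 → ℝ,
    nv = ∑ k, v k ^ 2 →
    B₁ = c ^ 4 + 3 * p' * nv →
    B₂ = c ^ 4 + 2 * c ^ 2 * p' + p' * nv →
    B₃ = c ^ 2 * (c ^ 2 + 3 * p') →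
    B₄ = c ^ 2 * p' * (c ^ 2 - nv) →
    w = Fin.cons 0 v →
    (Matrix.of fun i j : Fin 4 =>
      if i = 0 ∧ j = 0 then B₁
      else if i = 0 then B₂ * w j
      else if j = 0 then B₂ * w i
      else B₃ * w i * w j + (if i = j then B₄ else 0)).PosDef := by
  rintro nv B₁ B₂ B₃ B₄ w hnv rfl rfl rfl rfl rfl
  have hvv : v ⬝ᵥ v = nv := by simp only [hnv, dotProduct, sq]
  have hnv0 : 0 ≤ nv := hvv ▸ by simpa using dotProduct_self_star_nonneg v
  have hnvc : nv < c ^ 2 := hnv ▸ hv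
  have hc2 : 0 < c ^ 2 := hnv0.trans_lt hnvc
  have hc : c ≠ 0 := by rintro rfl; norm_num at hc2
  have hgap : 0 < c ^ 2 - nv := sub_pos.2 hnvc
  have hsubluminal : 0 < c ^ 4 - p' * nv := by nlinarith
  refine eulerA0_posDef (v := v) (by positivity) (by positivity) ?_
  rw [hvv, euler_schur_eq]
  positivity

theorem A0_positive_definite (c p' : ℝ) (v : Fin 3 → ℝ)
    (hc : 0 < c) (hv : ∑ k, v k ^ 2 < c ^ 2) (hp0 : 0 < p') (hpc : p' ≤ c ^ 2) :
    ∀ nv B₁ B₂ B₃ B₄ : ℝ, ∀ w : Fin 4 → ℝ,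
    nv = ∑ k, v k ^ 2 →
    B₁ = c ^ 4 + 3 * p' * nv →
    B₂ = c ^ 4 + 2 * c ^ 2 * p' + p' * nv →
    B₃ = c ^ 2 * (c ^ 2 + 3 * p') →
    B₄ = c ^ 2 * p' * (c ^ 2 - nv) →
    w = Fin.cons 0 v →
    (Matrix.of fun i j : Fin 4 =>
      if i = 0 ∧ j = 0 then B₁
      else if i = 0 then B₂ * w j
      else if j = 0 then B₂ * w i
      else B₃ * w i * w j + (if i = j then B₄ else 0)).PosDef :=
  A0_positive_definite_general c p' v hv hp0 hpc
end

section
/- Let c > 0 and let Φ : D → (0,∞) be a positive C¹ function on an interval D ⊆ ℝ with Φ' < 0 everywhere. Define w : D × {v ∈ ℝ³ : |v|² < c²} → ℝ⁴ by w₀(ρ,v) = −c³Φ(ρ)/√(c² − |v|²) + c² and wₖ(ρ,v) = c·Φ(ρ)·vₖ/√(c² − |v|²) for k = 1,2,3. Then the Jacobian determinant of w at (ρ,v) equals −c⁶·Φ(ρ)³·Φ'(ρ)/(c² − |v|²)², which is strictly positive. -/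
/-!
Write `x = (ρ, v)` and `g = √(c² - |v|²)`. The Jacobian matrix of `w` has first row
`(-c³Φ'/g, -c³Φ vᵀ/g³)` and remaining rows `(cΦ' v/g, cΦ (I/g + v vᵀ/g³))`. Adding `v_k/c²` times the
first row to row `k + 1` kills both the first column below the diagonal and the rank-one part
`v vᵀ`, leaving an upper triangular matrix with diagonal `-c³Φ'/g, cΦ/g, …, cΦ/g`. Hence in spatial
dimension `n` the determinant is `-c³Φ'/g · (cΦ/g)ⁿ`, which for `n = 3` is `-c⁶Φ³Φ'/(c² - |v|²)²`.
-/

variable {n : ℕ}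

section Jacobian

open Matrix

noncomputable def eulerJacobian (c φ φ' g : ℝ) (v : Fin n → ℝ) :
    Matrix (Fin (n + 1)) (Fin (n + 1)) ℝ :=
  Fin.cons (Fin.cons (-(c ^ 3 * φ') / g) fun j => -(c ^ 3 * φ * v j) / g ^ 3)
    fun k => Fin.cons (c * φ' * v k / g)
      fun j => c * φ * ((1 : Matrix (Fin n) (Fin n) ℝ) k j / g + v k * v j / g ^ 3)

theorem det_eulerJacobian (c φ φ' g : ℝ) (v : Fin n → ℝ) :
    (eulerJacobian c φ φ' g v).det = -(c ^ 3 * φ') / g * (c * φ / g) ^ n := by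
  set U : Matrix (Fin (n + 1)) (Fin (n + 1)) ℝ := Fin.cons (eulerJacobian c φ φ' g v 0)
    fun k => Fin.cons 0 fun j => c * φ / g * (1 : Matrix (Fin n) (Fin n) ℝ) k j
  -- also at `c = 0`, as `0 / 0 = 0`
  have hc3 : c ^ 3 / c ^ 2 = c := by
    rcases eq_or_ne c 0 with rfl | hc
    · simp
    · field_simp
  have hU : U.IsUpperTriangular := by
    intro i j hji
    cases i using Fin.cases with
    | zero => exact absurd hji (Fin.not_lt_zero j)
    | succ k =>
      cases j using Fin.cases with
      | zero => rfl
      | succ j => simp [U, one_apply_ne (Fin.succ_lt_succ_iff.1 hji).ne']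
  calc (eulerJacobian c φ φ' g v).det = U.det := by
        symm
        refine det_eq_of_forall_row_eq_smul_add_const (Fin.cons 0 fun k => v k / c ^ 2) 0 rfl ?_
        intro i j
        cases i using Fin.cases with
        | zero => simp [U]
        | succ k =>
          cases j using Fin.cases with
          | zero =>
            simp only [U, eulerJacobian, Fin.cons_zero, Fin.cons_succ]
            linear_combination (v k * φ' / g) * hc3
          | succ j =>
            simp only [U, eulerJacobian, Fin.cons_zero, Fin.cons_succ]
            linear_combination (v k * φ * v j / g ^ 3) * hc3
    _ = -(c ^ 3 * φ') / g * (c * φ / g) ^ n := by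
        rw [det_of_isUpperTriangular hU, Fin.prod_univ_succ]
        simp [U, eulerJacobian, div_pow]

theorem eulerJacobian_mulVec_zero (c φ φ' g : ℝ) (v : Fin n → ℝ) (h : Fin (n + 1) → ℝ) :
    (eulerJacobian c φ φ' g v *ᵥ h) 0 =
      -(c ^ 3 * φ') / g * h 0 - c ^ 3 * φ / g ^ 3 * ∑ j : Fin n, v j * h j.succ := by
  simp only [eulerJacobian, mulVec, dotProduct, Fin.sum_univ_succ, Fin.cons_zero, Fin.cons_succ,
    Finset.mul_sum, sub_eq_add_neg, ← Finset.sum_neg_distrib]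
  ring_nf

theorem eulerJacobian_mulVec_succ (c φ φ' g : ℝ) (v : Fin n → ℝ) (h : Fin (n + 1) → ℝ)
    (k : Fin n) :
    (eulerJacobian c φ φ' g v *ᵥ h) k.succ =
      c * φ' * v k / g * h 0 + c * φ / g * h k.succ +
        c * φ * v k / g ^ 3 * ∑ j : Fin n, v j * h j.succ := by
  simp only [eulerJacobian, mulVec, dotProduct, Fin.sum_univ_succ, Fin.cons_zero, Fin.cons_succ,
    one_apply, mul_add, add_mul, Finset.sum_add_distrib, ite_div, mul_ite, ite_mul, one_div,
    zero_div, mul_zero, zero_mul, Finset.sum_ite_eq, Finset.mem_univ, if_true, Finset.mul_sum]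
  ring_nf

end Jacobian

/-- The change of variables `w`, in coordinates `x = (ρ, v)`: `x 0 = ρ` and `x k.succ = v k`. -/
noncomputable def eulerChart (c : ℝ) (Φ : ℝ → ℝ) (x : Fin (n + 1) → ℝ) : Fin (n + 1) → ℝ :=
  Fin.cons (-(c ^ 3 * Φ (x 0)) / √(c ^ 2 - ∑ k : Fin n, x k.succ ^ 2) + c ^ 2)
    fun k => c * Φ (x 0) * x k.succ / √(c ^ 2 - ∑ k : Fin n, x k.succ ^ 2)

noncomputable def spatialInner (x : Fin (n + 1) → ℝ) : (Fin (n + 1) → ℝ) →L[ℝ] ℝ :=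
  ∑ k : Fin n, x k.succ • ContinuousLinearMap.proj k.succ

@[simp]
theorem spatialInner_apply (x h : Fin (n + 1) → ℝ) :
    spatialInner x h = ∑ k : Fin n, x k.succ * h k.succ := by
  simp [spatialInner]

theorem hasFDerivAt_sum_sq_succ (x : Fin (n + 1) → ℝ) :
    HasFDerivAt (fun y : Fin (n + 1) → ℝ => ∑ k : Fin n, y k.succ ^ 2)
      ((2 : ℝ) • spatialInner x) x := by
  refine (HasFDerivAt.fun_sum fun k _ => (hasFDerivAt_apply k.succ x).pow 2).congr_fderiv ?_
  ext h
  simp [Finset.mul_sum, mul_assoc]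

theorem hasFDerivAt_inv_sqrt_sub_sum_sq {c : ℝ} {x : Fin (n + 1) → ℝ}
    (hx : ∑ k : Fin n, x k.succ ^ 2 < c ^ 2) :
    HasFDerivAt (fun y : Fin (n + 1) → ℝ => (√(c ^ 2 - ∑ k : Fin n, y k.succ ^ 2))⁻¹)
      ((√(c ^ 2 - ∑ k : Fin n, x k.succ ^ 2) ^ 3)⁻¹ • spatialInner x) x := by
  have hs : 0 < c ^ 2 - ∑ k : Fin n, x k.succ ^ 2 := sub_pos.2 hx
  have hg := Real.sqrt_pos.2 hs
  refine ((hasDerivAt_inv hg.ne').comp_hasFDerivAt x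
    (((hasFDerivAt_sum_sq_succ x).const_sub (c ^ 2)).sqrt hs.ne')).congr_fderiv ?_
  rw [smul_neg, smul_neg, neg_smul, neg_neg, smul_smul, smul_smul]
  congr 1
  field_simp

theorem hasFDerivAt_eulerChart {c φ' : ℝ} {Φ : ℝ → ℝ} {x : Fin (n + 1) → ℝ}
    (hΦ : HasDerivAt Φ φ' (x 0)) (hx : ∑ k : Fin n, x k.succ ^ 2 < c ^ 2) :
    HasFDerivAt (eulerChart c Φ)
      (Matrix.toLin' (eulerJacobian c (Φ (x 0)) φ' (√(c ^ 2 - ∑ k : Fin n, x k.succ ^ 2))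
        fun k => x k.succ)).toContinuousLinearMap x := by
  have hinv := hasFDerivAt_inv_sqrt_sub_sum_sq hx
  have hρ : HasFDerivAt (fun y : Fin (n + 1) → ℝ => Φ (y 0))
      (φ' • ContinuousLinearMap.proj (R := ℝ) (φ := fun _ => ℝ) 0) x :=
    hΦ.comp_hasFDerivAt x (hasFDerivAt_apply 0 x)
  refine hasFDerivAt_pi'' fun i => ?_
  cases i using Fin.cases with
  | zero =>
    simp only [eulerChart, Fin.cons_zero, div_eq_mul_inv]
    refine (((hρ.const_mul (c ^ 3)).neg.mul hinv).add_const (c ^ 2)).congr_fderiv ?_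
    ext h
    rw [ContinuousLinearMap.comp_apply, LinearMap.coe_toContinuousLinearMap', Matrix.toLin'_apply,
      ContinuousLinearMap.proj_apply, eulerJacobian_mulVec_zero]
    simp only [add_apply, smul_apply, neg_apply, ContinuousLinearMap.proj_apply, Pi.neg_apply, neg_smul,
      smul_neg, smul_eq_mul, spatialInner_apply]
    ring
  | succ k =>
    simp only [eulerChart, Fin.cons_succ, div_eq_mul_inv]
    refine (((hρ.const_mul c).mul (hasFDerivAt_apply k.succ x)).mul hinv).congr_fderiv ?_
    ext h
    rw [ContinuousLinearMap.comp_apply, LinearMap.coe_toContinuousLinearMap', Matrix.toLin'_apply,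
      ContinuousLinearMap.proj_apply, eulerJacobian_mulVec_succ]
    simp only [add_apply, smul_apply, ContinuousLinearMap.proj_apply, Pi.mul_apply, smul_add, smul_eq_mul, spatialInner_apply]
    ring

theorem det_fderiv_eulerChart {c φ' : ℝ} {Φ : ℝ → ℝ} {x : Fin (n + 1) → ℝ}
    (hΦ : HasDerivAt Φ φ' (x 0)) (hx : ∑ k : Fin n, x k.succ ^ 2 < c ^ 2) :
    (fderiv ℝ (eulerChart c Φ) x).det =
      -(c ^ 3 * φ') / √(c ^ 2 - ∑ k : Fin n, x k.succ ^ 2) *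
        (c * Φ (x 0) / √(c ^ 2 - ∑ k : Fin n, x k.succ ^ 2)) ^ n := by
  rw [(hasFDerivAt_eulerChart hΦ hx).fderiv, LinearMap.det_toContinuousLinearMap,
    LinearMap.det_toLin', det_eulerJacobian]

theorem jacobian_determinant_general (c : ℝ) (hc : 0 < c) (D : Set ℝ) (Φ Φ' : ℝ → ℝ)
    (hΦpos : ∀ ρ ∈ D, 0 < Φ ρ)
    (hΦd : ∀ ρ ∈ D, HasDerivAt Φ (Φ' ρ) ρ)
    (hΦ'neg : ∀ ρ ∈ D, Φ' ρ < 0) :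
    ∀ W : (Fin 4 → ℝ) → (Fin 4 → ℝ),
    W = (fun x => Fin.cons
        (-(c ^ 3 * Φ (x 0)) / Real.sqrt (c ^ 2 - ∑ k : Fin 3, x k.succ ^ 2) + c ^ 2)
        (fun k : Fin 3 => c * Φ (x 0) * x k.succ /
          Real.sqrt (c ^ 2 - ∑ k : Fin 3, x k.succ ^ 2))) →
    ∀ x : Fin 4 → ℝ, x 0 ∈ D → (∑ k : Fin 3, x k.succ ^ 2) < c ^ 2 →
      (fderiv ℝ W x).det =
        -(c ^ 6 * Φ (x 0) ^ 3 * Φ' (x 0)) / (c ^ 2 - ∑ k : Fin 3, x k.succ ^ 2) ^ 2 ∧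
      0 < -(c ^ 6 * Φ (x 0) ^ 3 * Φ' (x 0)) / (c ^ 2 - ∑ k : Fin 3, x k.succ ^ 2) ^ 2 := by
  rintro W rfl x hρ hv
  have hs : 0 < c ^ 2 - ∑ k : Fin 3, x k.succ ^ 2 := sub_pos.2 hv
  refine ⟨?_, div_pos ?_ (pow_pos hs 2)⟩
  · change (fderiv ℝ (eulerChart c Φ) x).det = _
    rw [det_fderiv_eulerChart (hΦd _ hρ) hv]
    set g := √(c ^ 2 - ∑ k : Fin 3, x k.succ ^ 2)
    have hg : g ^ 2 = c ^ 2 - ∑ k : Fin 3, x k.succ ^ 2 := Real.sq_sqrt hs.le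
    rw [← hg]
    field_simp
  · have := mul_pos (mul_pos (pow_pos hc 6) (pow_pos (hΦpos _ hρ) 3)) (neg_pos.2 (hΦ'neg _ hρ))
    linarith

theorem jacobian_determinant (c : ℝ) (hc : 0 < c) (D : Set ℝ) (hD : IsOpen D)
    (hDi : D.OrdConnected) (Φ Φ' : ℝ → ℝ)
    (hΦpos : ∀ ρ ∈ D, 0 < Φ ρ)
    (hΦd : ∀ ρ ∈ D, HasDerivAt Φ (Φ' ρ) ρ)
    (hΦ'c : ContinuousOn Φ' D)
    (hΦ'neg : ∀ ρ ∈ D, Φ' ρ < 0) :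
    ∀ W : (Fin 4 → ℝ) → (Fin 4 → ℝ),
    W = (fun x => Fin.cons
        (-(c ^ 3 * Φ (x 0)) / Real.sqrt (c ^ 2 - ∑ k : Fin 3, x k.succ ^ 2) + c ^ 2)
        (fun k : Fin 3 => c * Φ (x 0) * x k.succ /
          Real.sqrt (c ^ 2 - ∑ k : Fin 3, x k.succ ^ 2))) →
    ∀ x : Fin 4 → ℝ, x 0 ∈ D → (∑ k : Fin 3, x k.succ ^ 2) < c ^ 2 →
      (fderiv ℝ W x).det =
        -(c ^ 6 * Φ (x 0) ^ 3 * Φ' (x 0)) / (c ^ 2 - ∑ k : Fin 3, x k.succ ^ 2) ^ 2 ∧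
      0 < -(c ^ 6 * Φ (x 0) ^ 3 * Φ' (x 0)) / (c ^ 2 - ∑ k : Fin 3, x k.succ ^ 2) ^ 2 :=
  jacobian_determinant_general c hc D Φ Φ' hΦpos hΦd hΦ'neg
end
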